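/- Let f : ℝ² → ℝ be a nonzero homogeneous polynomial of degree d ≥ 1. Then the Łojasiewicz gradient exponent of f at the origin equals 1 - 1/d. -/

import Mathlib

noncomputable def LGE {𝕜 : Type*} [RCLike 𝕜] {E : Type*} [NormedAddCommGroup E]
    [NormedSpace 𝕜 E] (f : E → 𝕜) : ℝ :=
  sInf {l : ℝ | 0 < l ∧ ∃ c > (0:ℝ), ∃ ε > (0:ℝ), ∀ z : E, ‖z‖ < ε →
    c * ‖f z‖ ^ l ≤ ‖fderiv 𝕜 f z‖}

/-!
Write `α = 1 - 1/d`. By homogeneity, `f (t • z) = t ^ d * f z` and `∇f (t • z) = t ^ (d-1) • ∇f z`,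
so `|f| ^ α` and `‖∇f‖` scale alike and the gradient inequality `c |f| ^ α ≤ ‖∇f‖` only has to be
checked on the segments `t ↦ eᵢ + t eⱼ`, `|t| ≤ 1`. There `f` restricts to a nonzero polynomial
`p` of degree `≤ d`; the derivative along `eⱼ` is `p'` and Euler's identity `∇f(w) w = d f(w)`
controls `|p|`, so it suffices that `|p| ^ α = O(max |p| |p'|)` on `[-1, 1]`. Near a root of
multiplicity `m ≤ d`, `|p| ^ α ≤ |p| ^ (1 - 1/m)` and both this and `|p'|` are of exact order
`|t - t₀| ^ (m - 1)`; compactness makes the constant uniform. Hence every `l > α` is an admissible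
exponent. Conversely, along a ray `t • z₀` with `f z₀ ≠ 0`, an exponent `l` requires
`t ^ (d l) ≲ t ^ (d - 1)` as `t → 0⁺`, i.e. `l ≥ α`.
-/

open Filter Topology Asymptotics

theorem IsCompact.isBigO_principal_of_isBigO_nhds {α E F : Type*} [TopologicalSpace α] [Norm E]
    [SeminormedAddCommGroup F] {f : α → E} {g : α → F} {K : Set α} (hK : IsCompact K)
    (h : ∀ x ∈ K, f =O[𝓝 x] g) : f =O[𝓟 K] g := by
  refine hK.induction_on (p := fun s => f =O[𝓟 s] g) (by simp)
    (fun s t hst ht => ht.mono (principal_mono.2 hst))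
    (fun s t hs ht => by simpa only [sup_principal] using hs.sup ht) fun x hx => ?_
  obtain ⟨c, hc⟩ := (h x hx).bound
  exact ⟨_, mem_nhdsWithin_of_mem_nhds hc, .of_bound c (mem_principal_self _)⟩

theorem ContinuousAt.isBigO_of_ne_zero {α E F : Type*} [TopologicalSpace α]
    [NormedAddCommGroup E] [NormedAddCommGroup F] {f : α → E} {g : α → F} {x : α}
    (hf : ContinuousAt f x) (hg : ContinuousAt g x) (hgx : g x ≠ 0) : f =O[𝓝 x] g := by
  refine (isBigO_const_of_tendsto hf one_ne_zero).trans
    ((isBigO_const_left_iff_pos_le_norm (one_ne_zero (α := ℝ))).2 ⟨‖g x‖ / 2, by positivity, ?_⟩)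
  exact (hg.norm.eventually (lt_mem_nhds (half_lt_self (norm_pos_iff.2 hgx)))).mono
    fun _ => le_of_lt

theorem one_sub_one_div_natCast_nonneg (d : ℕ) : (0 : ℝ) ≤ 1 - 1 / (d : ℝ) := by
  simpa [one_div] using Nat.cast_inv_le_one (α := ℝ) d

theorem Real.pow_rpow_one_sub_one_div {x : ℝ} (hx : 0 ≤ x) {m : ℕ} (hm : 1 ≤ m) :
    (x ^ m) ^ (1 - 1 / (m : ℝ)) = x ^ (m - 1) := by
  rw [← Real.rpow_natCast x m, ← Real.rpow_mul hx, ← Real.rpow_natCast]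
  congr 1
  have : (m : ℝ) ≠ 0 := by positivity
  push_cast [Nat.cast_sub hm]
  field_simp

namespace Polynomial

variable {p : ℝ[X]}

theorem abs_eval_rpow_isBigO_derivative_of_isRoot (hp : p ≠ 0) {t₀ : ℝ} (ht₀ : p.IsRoot t₀) :
    (fun t => |p.eval t| ^ (1 - 1 / (p.rootMultiplicity t₀ : ℝ))) =O[𝓝 t₀]
      fun t => p.derivative.eval t := by
  obtain ⟨q, hpq, hq⟩ := p.exists_eq_pow_rootMultiplicity_mul_and_not_dvd hp t₀
  rw [dvd_iff_isRoot] at hq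
  have hm : 1 ≤ p.rootMultiplicity t₀ := (rootMultiplicity_pos hp).2 ht₀
  set m := p.rootMultiplicity t₀
  -- `p' = (X - t₀) ^ (m - 1) * r` with `r(t₀) = m q(t₀) ≠ 0`, so both sides carry the factor
  -- `|t - t₀| ^ (m - 1)`
  set r := C (m : ℝ) * q + (X - C t₀) * derivative q
  have hp' : derivative p = (X - C t₀) ^ (m - 1) * r := by
    have hpow : (X - C t₀) ^ m = (X - C t₀) ^ (m - 1) * (X - C t₀) := by
      rw [← pow_succ, Nat.sub_add_cancel hm]
    rw [hpq, derivative_mul, derivative_X_sub_C_pow, hpow]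
    ring
  have hr : r.eval t₀ ≠ 0 := by
    simpa [r, Nat.one_le_iff_ne_zero.1 hm] using hq
  have hlhs : (fun t => |p.eval t| ^ (1 - 1 / (m : ℝ))) =
      fun t => |(t - t₀) ^ (m - 1)| * |q.eval t| ^ (1 - 1 / (m : ℝ)) := by
    funext t
    simp only [hpq, eval_mul, eval_pow, eval_sub, eval_X, eval_C, abs_mul, abs_pow]
    rw [Real.mul_rpow (by positivity) (abs_nonneg _),
      Real.pow_rpow_one_sub_one_div (abs_nonneg _) hm]
  have hrhs : (fun t => p.derivative.eval t) = fun t => (t - t₀) ^ (m - 1) * r.eval t := by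
    funext t
    simp [hp']
  rw [hlhs, hrhs]
  refine (isBigO_abs_left.2 (isBigO_refl _ _)).mul ?_
  exact ContinuousAt.isBigO_of_ne_zero
    ((Real.continuous_rpow_const (one_sub_one_div_natCast_nonneg m)).comp
      q.continuous.abs |>.continuousAt) r.continuous.continuousAt hr

theorem abs_eval_rpow_isBigO_max (hp : p ≠ 0) {d : ℕ} (hd : p.natDegree ≤ d) (t₀ : ℝ) :
    (fun t => |p.eval t| ^ (1 - 1 / (d : ℝ))) =O[𝓝 t₀]
      fun t => max |p.eval t| |p.derivative.eval t| := by
  by_cases ht₀ : p.IsRoot t₀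
  · have hm : 1 ≤ p.rootMultiplicity t₀ := (rootMultiplicity_pos hp).2 ht₀
    have hmd : p.rootMultiplicity t₀ ≤ d :=
      (count_roots p ▸ Multiset.count_le_card _ _).trans ((card_roots' p).trans hd)
    have hsmall : ∀ᶠ t in 𝓝 t₀, |p.eval t| ≤ 1 := by
      have := p.continuous.abs.tendsto t₀
      rw [ht₀.eq_zero, abs_zero] at this
      exact this.eventually (ge_mem_nhds zero_lt_one)
    refine (IsBigO.of_bound 1 (hsmall.mono fun t ht => ?_)).trans
      ((abs_eval_rpow_isBigO_derivative_of_isRoot hp ht₀).trans (isBigO_of_le _ fun t => ?_))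
    · rw [one_mul, Real.norm_of_nonneg (by positivity), Real.norm_of_nonneg (by positivity)]
      refine Real.rpow_le_rpow_of_exponent_ge' (abs_nonneg _) ht
        (one_sub_one_div_natCast_nonneg _) (sub_le_sub_left ?_ 1)
      exact one_div_le_one_div_of_le (by exact_mod_cast hm) (by exact_mod_cast hmd)
    · rw [Real.norm_eq_abs, Real.norm_of_nonneg (le_max_of_le_left (abs_nonneg _))]
      exact le_max_right _ _
  · refine (ContinuousAt.isBigO_of_ne_zero ?_ p.continuous.continuousAt ht₀).trans
      (isBigO_of_le _ fun t => ?_)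
    · exact ((Real.continuous_rpow_const (one_sub_one_div_natCast_nonneg d)).comp
        p.continuous.abs).continuousAt
    · rw [Real.norm_eq_abs, Real.norm_of_nonneg (le_max_of_le_left (abs_nonneg _))]
      exact le_max_left _ _

end Polynomial

namespace MvPolynomial

variable {σ R : Type*} [CommSemiring R] {f : MvPolynomial σ R} {d : ℕ}

theorem IsHomogeneous.eval_smul (hf : f.IsHomogeneous d) (c : R) (x : σ → R) :
    eval (c • x) f = c ^ d * eval x f := by
  rw [eval_eq, eval_eq, Finset.mul_sum]
  refine Finset.sum_congr rfl fun m hm => ?_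
  rw [← hf (mem_support_iff.1 hm)]
  simp only [Pi.smul_apply, smul_eq_mul, mul_pow, Finset.prod_mul_distrib,
    Finset.prod_pow_eq_pow_sum, Finsupp.weight_apply, Finsupp.sum, Pi.one_apply, mul_one]
  ring

noncomputable def restrictToLine (f : MvPolynomial σ R) (a b : σ → R) : Polynomial R :=
  aeval (fun k => Polynomial.C (b k) * Polynomial.X + Polynomial.C (a k)) f

theorem eval_restrictToLine (a b : σ → R) (t : R) :
    (f.restrictToLine a b).eval t = eval (a + t • b) f := by
  rw [restrictToLine, ← Polynomial.coe_aeval_eq_eval, comp_aeval_apply, aeval_eq_eval₂Hom,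
    Algebra.algebraMap_self]
  have hline : (fun k => Polynomial.aeval t (Polynomial.C (b k) * Polynomial.X + Polynomial.C (a k)))
      = a + t • b := by
    funext k
    simp only [Polynomial.coe_aeval_eq_eval, Polynomial.eval_add, Polynomial.eval_mul,
      Polynomial.eval_C, Polynomial.eval_X, Pi.add_apply, Pi.smul_apply, smul_eq_mul]
    ring
  rw [hline]
  rfl

theorem natDegree_restrictToLine_le (a b : σ → R) :
    (f.restrictToLine a b).natDegree ≤ f.totalDegree := by
  rw [restrictToLine, aeval_def, eval₂_eq]
  refine Polynomial.natDegree_sum_le_of_forall_le _ _ fun m hm => ?_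
  refine (Polynomial.natDegree_C_mul_le _ _).trans ((Polynomial.natDegree_prod_le _ _).trans ?_)
  refine (Finset.sum_le_sum fun k _ => Polynomial.natDegree_pow_le.trans ?_).trans
    (le_totalDegree hm)
  exact mul_le_of_le_one_right' Polynomial.natDegree_linear_le

end MvPolynomial

section HomogeneousFunction

variable {E : Type*} [NormedAddCommGroup E] [NormedSpace ℝ E] {F : E → ℝ} {d : ℕ}

theorem apply_zero_of_homogeneous (hF : ∀ (t : ℝ) (z : E), F (t • z) = t ^ d * F z)
    (hd : 1 ≤ d) : F 0 = 0 := by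
  simpa [zero_pow (Nat.one_le_iff_ne_zero.1 hd)] using hF 0 0

theorem fderiv_smul_of_homogeneous (hF : ∀ (t : ℝ) (z : E), F (t • z) = t ^ d * F z)
    (hd : 1 ≤ d) {t : ℝ} (ht : t ≠ 0) (z : E) :
    fderiv ℝ F (t • z) = t ^ (d - 1) • fderiv ℝ F z := by
  refine smul_right_injective _ ht ?_
  have hcomp : (fun y => F (t • y)) = t ^ d • F := funext fun y => hF t y
  dsimp only
  rw [← fderiv_comp_smul, hcomp, fderiv_const_smul_field, smul_smul, ← pow_succ',
    Nat.sub_add_cancel hd]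
  rfl

theorem norm_fderiv_smul_of_homogeneous (hF : ∀ (t : ℝ) (z : E), F (t • z) = t ^ d * F z)
    (hd : 1 ≤ d) {t : ℝ} (ht : t ≠ 0) (z : E) :
    ‖fderiv ℝ F (t • z)‖ = |t| ^ (d - 1) * ‖fderiv ℝ F z‖ := by
  rw [fderiv_smul_of_homogeneous hF hd ht, norm_smul, norm_pow, Real.norm_eq_abs]

theorem fderiv_apply_self_of_homogeneous (hF : ∀ (t : ℝ) (z : E), F (t • z) = t ^ d * F z)
    {z : E} (hFz : DifferentiableAt ℝ F z) : fderiv ℝ F z z = d * F z := by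
  have hray : HasDerivAt (fun t : ℝ => F (t • z)) (fderiv ℝ F z z) 1 := by
    have hcurve : HasDerivAt (fun t : ℝ => t • z) z 1 := by
      simpa using (hasDerivAt_id (1 : ℝ)).smul_const z
    exact hFz.hasFDerivAt.comp_hasDerivAt_of_eq 1 hcurve (one_smul ℝ z).symm
  have hpow : HasDerivAt (fun t : ℝ => t ^ d * F z) (d * F z) 1 := by
    simpa using (hasDerivAt_pow d (1 : ℝ)).mul_const (F z)
  simp only [hF] at hray
  exact hray.unique hpow

theorem mul_rpow_le_norm_fderiv_smul (hF : ∀ (t : ℝ) (z : E), F (t • z) = t ^ d * F z)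
    (hd : 1 ≤ d) {c : ℝ} {w : E} (hw : c * |F w| ^ (1 - 1 / (d : ℝ)) ≤ ‖fderiv ℝ F w‖)
    {t : ℝ} (ht : t ≠ 0) :
    c * |F (t • w)| ^ (1 - 1 / (d : ℝ)) ≤ ‖fderiv ℝ F (t • w)‖ := by
  rw [hF, abs_mul, abs_pow, Real.mul_rpow (by positivity) (abs_nonneg _),
    Real.pow_rpow_one_sub_one_div (abs_nonneg t) hd, norm_fderiv_smul_of_homogeneous hF hd ht,
    mul_left_comm]
  exact mul_le_mul_of_nonneg_left hw (by positivity)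

theorem max_abs_eval_le_two_mul_norm_fderiv (hF : ∀ (t : ℝ) (z : E), F (t • z) = t ^ d * F z)
    (hFd : Differentiable ℝ F) (hd : 1 ≤ d) {a b : E} (ha : ‖a‖ ≤ 1) (hb : ‖b‖ ≤ 1)
    {p : Polynomial ℝ} (hp : ∀ t, F (a + t • b) = p.eval t) {t : ℝ} (ht : |t| ≤ 1) :
    max |p.eval t| |p.derivative.eval t| ≤ 2 * ‖fderiv ℝ F (a + t • b)‖ := by
  set L := fderiv ℝ F (a + t • b)
  have hline : HasDerivAt (fun s : ℝ => F (a + s • b)) (L b) t := by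
    have hcurve : HasDerivAt (fun s : ℝ => a + s • b) b t := by
      simpa using ((hasDerivAt_id t).smul_const b).const_add a
    exact (hFd _).hasFDerivAt.comp_hasDerivAt t hcurve
  simp only [hp] at hline
  have hderiv : L b = p.derivative.eval t := hline.unique (p.hasDerivAt t)
  have heuler : L (a + t • b) = d * p.eval t := by
    rw [fderiv_apply_self_of_homogeneous hF (hFd _), hp]
  have hnorm : ‖a + t • b‖ ≤ 2 := by
    calc ‖a + t • b‖ ≤ ‖a‖ + |t| * ‖b‖ := by
          rw [← Real.norm_eq_abs, ← norm_smul]; exact norm_add_le _ _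
      _ ≤ 1 + 1 * 1 := by gcongr
      _ = 2 := by norm_num
  refine max_le ?_ ?_
  · calc |p.eval t| ≤ d * |p.eval t| :=
          le_mul_of_one_le_left (abs_nonneg _) (by exact_mod_cast hd)
      _ = |L (a + t • b)| := by rw [heuler, abs_mul, Nat.abs_cast]
      _ ≤ ‖L‖ * ‖a + t • b‖ := L.le_opNorm _
      _ ≤ 2 * ‖L‖ := by rw [mul_comm]; gcongr
  · calc |p.derivative.eval t| = |L b| := by rw [hderiv]
      _ ≤ ‖L‖ * ‖b‖ := L.le_opNorm _
      _ ≤ 2 * ‖L‖ := by nlinarith [norm_nonneg L, norm_nonneg b]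

theorem exists_mul_rpow_le_norm_fderiv_on_segment_of_polynomial
    (hF : ∀ (t : ℝ) (z : E), F (t • z) = t ^ d * F z) (hFd : Differentiable ℝ F) (hd : 1 ≤ d)
    {a b : E} (ha : ‖a‖ ≤ 1) (hb : ‖b‖ ≤ 1) {p : Polynomial ℝ} (hp0 : p ≠ 0)
    (hpd : p.natDegree ≤ d) (hp : ∀ t, F (a + t • b) = p.eval t) :
    ∃ c > 0, ∀ t ∈ Set.Icc (-1 : ℝ) 1,
      c * |F (a + t • b)| ^ (1 - 1 / (d : ℝ)) ≤ ‖fderiv ℝ F (a + t • b)‖ := by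
  obtain ⟨C, hC, hbound⟩ := (isCompact_Icc.isBigO_principal_of_isBigO_nhds
    fun t _ => p.abs_eval_rpow_isBigO_max hp0 hpd t).exists_pos
  refine ⟨(2 * C)⁻¹, by positivity, fun t ht => ?_⟩
  have hpt := eventually_principal.1 hbound.bound t ht
  rw [Real.norm_of_nonneg (by positivity),
    Real.norm_of_nonneg (le_max_of_le_left (abs_nonneg _))] at hpt
  rw [inv_mul_le_iff₀ (by positivity), hp, mul_assoc, mul_left_comm]
  exact hpt.trans (mul_le_mul_of_nonneg_left
    (max_abs_eval_le_two_mul_norm_fderiv hF hFd hd ha hb hp (abs_le.2 ht)) hC.le)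

end HomogeneousFunction

section Lojasiewicz

variable {E : Type*} [NormedAddCommGroup E] [NormedSpace ℝ E] {F : E → ℝ} {d : ℕ}

/-- `LGE F` is by definition the infimum of this set. -/
def lojasiewiczExponents (F : E → ℝ) : Set ℝ :=
  {l | 0 < l ∧ ∃ c > (0 : ℝ), ∃ ε > (0 : ℝ), ∀ z : E, ‖z‖ < ε → c * ‖F z‖ ^ l ≤ ‖fderiv ℝ F z‖}

theorem mem_lojasiewiczExponents_of_lt {α l : ℝ} (hα : 0 ≤ α) (hl : α < l) (hF0 : F 0 = 0)
    (hFc : ContinuousAt F 0) {c : ℝ} (hc : 0 < c)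
    (hgrad : ∀ z, z ≠ 0 → c * |F z| ^ α ≤ ‖fderiv ℝ F z‖) : l ∈ lojasiewiczExponents F := by
  have hl0 : 0 < l := hα.trans_lt hl
  obtain ⟨ε, hε, hsmall⟩ := Metric.continuousAt_iff.1 hFc 1 one_pos
  refine ⟨hl0, c, hc, ε, hε, fun z hz => ?_⟩
  rcases eq_or_ne z 0 with rfl | hz0
  · simp [hF0, Real.zero_rpow hl0.ne']
  have hFz : |F z| ≤ 1 := by
    simpa [hF0] using (hsmall (by simpa using hz)).le
  calc c * ‖F z‖ ^ l ≤ c * |F z| ^ α := by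
        rw [Real.norm_eq_abs]
        exact mul_le_mul_of_nonneg_left
          (Real.rpow_le_rpow_of_exponent_ge' (abs_nonneg _) hFz hα hl.le) hc.le
    _ ≤ ‖fderiv ℝ F z‖ := hgrad z hz0

theorem one_sub_one_div_le_of_mem_lojasiewiczExponents
    (hF : ∀ (t : ℝ) (z : E), F (t • z) = t ^ d * F z) (hd : 1 ≤ d) {z₀ : E} (hz₀ : F z₀ ≠ 0)
    {l : ℝ} (hl : l ∈ lojasiewiczExponents F) : 1 - 1 / (d : ℝ) ≤ l := by
  obtain ⟨-, c, hc, ε, hε, H⟩ := hl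
  by_contra! hlt
  set β := (d : ℝ) - 1 - d * l with hβdef
  have hβ : 0 < β := by
    have : (d : ℝ) * (1 - 1 / d) = d - 1 := by field_simp
    have hd' : (0 : ℝ) < d := by exact_mod_cast hd
    nlinarith
  set K := ‖fderiv ℝ F z₀‖
  set a := c * |F z₀| ^ l
  have ha : 0 < a := mul_pos hc (Real.rpow_pos_of_pos (abs_pos.2 hz₀) l)
  have hz₀' : 0 < ‖z₀‖ := norm_pos_iff.2 fun h => hz₀ (h ▸ apply_zero_of_homogeneous hF hd)
  -- along the ray `t • z₀` the inequality reads `a ≤ K * t ^ β`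
  have hray : ∀ t ∈ Set.Ioo 0 (ε / ‖z₀‖), a ≤ K * t ^ β := by
    rintro t ⟨ht, htε⟩
    have key := H (t • z₀) (by
      rw [norm_smul, Real.norm_of_nonneg ht.le]; exact (lt_div_iff₀ hz₀').1 htε)
    rw [Real.norm_eq_abs, hF, abs_mul, abs_pow, abs_of_pos ht,
      Real.mul_rpow (by positivity) (abs_nonneg _), ← Real.rpow_natCast, ← Real.rpow_mul ht.le,
      norm_fderiv_smul_of_homogeneous hF hd ht.ne', abs_of_pos ht, ← Real.rpow_natCast,
      Nat.cast_sub hd, Nat.cast_one] at key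
    have hsplit : t ^ ((d : ℝ) - 1) = t ^ ((d : ℝ) * l) * t ^ β := by
      rw [← Real.rpow_add ht, hβdef]; ring_nf
    refine le_of_mul_le_mul_left ?_ (Real.rpow_pos_of_pos ht ((d : ℝ) * l))
    calc t ^ ((d : ℝ) * l) * a = c * (t ^ ((d : ℝ) * l) * |F z₀| ^ l) := by ring
      _ ≤ t ^ ((d : ℝ) - 1) * K := key
      _ = t ^ ((d : ℝ) * l) * (K * t ^ β) := by rw [hsplit]; ring
  have hlim : Tendsto (fun t : ℝ => K * t ^ β) (𝓝[>] 0) (𝓝 0) := by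
    simpa [Real.zero_rpow hβ.ne'] using
      (((Real.continuous_rpow_const hβ.le).tendsto 0).const_mul K).mono_left nhdsWithin_le_nhds
  have : a ≤ 0 :=
    ge_of_tendsto hlim (eventually_of_mem (Ioo_mem_nhdsGT (by positivity)) hray)
  linarith

theorem LGE_eq_of_homogeneous (hF : ∀ (t : ℝ) (z : E), F (t • z) = t ^ d * F z) (hd : 1 ≤ d)
    (hFc : ContinuousAt F 0) {z₀ : E} (hz₀ : F z₀ ≠ 0) {c : ℝ} (hc : 0 < c)
    (hgrad : ∀ z, z ≠ 0 → c * |F z| ^ (1 - 1 / (d : ℝ)) ≤ ‖fderiv ℝ F z‖) :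
    LGE F = 1 - 1 / (d : ℝ) := by
  have hmem : ∀ l, 1 - 1 / (d : ℝ) < l → l ∈ lojasiewiczExponents F := fun l hl =>
    mem_lojasiewiczExponents_of_lt (one_sub_one_div_natCast_nonneg d) hl
      (apply_zero_of_homogeneous hF hd) hFc hc hgrad
  refine le_antisymm (le_of_forall_gt_imp_ge_of_dense fun l hl => ?_) ?_
  · exact csInf_le ⟨0, fun _ h => h.1.le⟩ (hmem l hl)
  · exact le_csInf ⟨_, hmem _ (lt_add_one _)⟩
      fun l hl => one_sub_one_div_le_of_mem_lojasiewiczExponents hF hd hz₀ hl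

end Lojasiewicz

theorem eq_smul_single_add_smul_single_of_fin_two {K : Type*} [Field K] {i j : Fin 2}
    (hij : i ≠ j) {x : Fin 2 → K} (hx : x i ≠ 0) :
    x = x i • (Pi.single i 1 + (x j / x i) • Pi.single j 1) := by
  funext k
  rcases (by omega : k = i ∨ k = j) with rfl | rfl
  · simp [hij.symm]
  · simp [hij, mul_div_cancel₀ _ hx]

theorem EuclideanSpace.eq_smul_single_add_smul_single_of_fin_two {𝕜 : Type*} [RCLike 𝕜]
    {i j : Fin 2} (hij : i ≠ j) {z : EuclideanSpace 𝕜 (Fin 2)} (hz : z i ≠ 0) :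
    z = z i • (EuclideanSpace.single i 1 + (z j / z i) • EuclideanSpace.single j 1) := by
  ext k
  rcases (by omega : k = i ∨ k = j) with rfl | rfl
  · simp [hij.symm]
  · simp [hij, mul_div_cancel₀ _ hz]

namespace MvPolynomial

theorem IsHomogeneous.restrictToLine_single_ne_zero {K : Type*} [Field K] [Infinite K]
    {f : MvPolynomial (Fin 2) K} {d : ℕ} (hf : f.IsHomogeneous d) (hf0 : f ≠ 0) {i j : Fin 2}
    (hij : i ≠ j) : f.restrictToLine (Pi.single i 1) (Pi.single j 1) ≠ 0 := by
  intro h0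
  -- by homogeneity `f` vanishes wherever `x i ≠ 0`, so `X i * f` vanishes everywhere
  refine hf0 ((mul_eq_zero.1 (MvPolynomial.funext fun x => ?_)).resolve_left (X_ne_zero i))
  rw [eval_mul, eval_X, map_zero, mul_eq_zero, or_iff_not_imp_left]
  intro hx
  calc eval x f = eval (x i • (Pi.single i 1 + (x j / x i) • Pi.single j 1)) f :=
        congrArg (eval · f) (eq_smul_single_add_smul_single_of_fin_two hij hx)
    _ = 0 := by rw [hf.eval_smul, ← eval_restrictToLine, h0, Polynomial.eval_zero, mul_zero]

theorem differentiable_eval_euclidean {σ : Type*} [Fintype σ] (f : MvPolynomial σ ℝ) :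
    Differentiable ℝ fun z : EuclideanSpace ℝ σ => eval (fun i => z i) f := fun z =>
  (AnalyticOnNhd.eval_continuousLinearMap' (𝕜 := ℝ)
    (fun i => EuclideanSpace.proj (𝕜 := ℝ) (ι := σ) i) f z trivial).differentiableAt

variable {f : MvPolynomial (Fin 2) ℝ} {d : ℕ}

theorem IsHomogeneous.exists_mul_rpow_le_norm_fderiv_on_segment (hf : f.IsHomogeneous d)
    (hf0 : f ≠ 0) (hd : 1 ≤ d) {i j : Fin 2} (hij : i ≠ j) :
    ∃ c > 0, ∀ t ∈ Set.Icc (-1 : ℝ) 1,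
      c * |eval (fun k => (EuclideanSpace.single i 1 + t • EuclideanSpace.single j 1 :
        EuclideanSpace ℝ (Fin 2)) k) f| ^ (1 - 1 / (d : ℝ)) ≤
      ‖fderiv ℝ (fun z : EuclideanSpace ℝ (Fin 2) => eval (fun k => z k) f)
        (EuclideanSpace.single i 1 + t • EuclideanSpace.single j 1)‖ := by
  refine exists_mul_rpow_le_norm_fderiv_on_segment_of_polynomial (fun t z => hf.eval_smul t _)
    (differentiable_eval_euclidean f) hd (by simp) (by simp)
    (hf.restrictToLine_single_ne_zero hf0 hij)
    ((natDegree_restrictToLine_le _ _).trans hf.totalDegree_le) fun t => ?_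
  rw [eval_restrictToLine]
  rfl

theorem IsHomogeneous.exists_mul_rpow_le_norm_fderiv (hf : f.IsHomogeneous d) (hf0 : f ≠ 0)
    (hd : 1 ≤ d) :
    ∃ c > 0, ∀ z : EuclideanSpace ℝ (Fin 2), z ≠ 0 →
      c * |eval (fun i => z i) f| ^ (1 - 1 / (d : ℝ)) ≤
        ‖fderiv ℝ (fun z : EuclideanSpace ℝ (Fin 2) => eval (fun i => z i) f) z‖ := by
  set F := fun z : EuclideanSpace ℝ (Fin 2) => eval (fun i => z i) f
  obtain ⟨c₀, hc₀, h₀⟩ := hf.exists_mul_rpow_le_norm_fderiv_on_segment hf0 hd (i := 0) (j := 1)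
    (by decide)
  obtain ⟨c₁, hc₁, h₁⟩ := hf.exists_mul_rpow_le_norm_fderiv_on_segment hf0 hd (i := 1) (j := 0)
    (by decide)
  refine ⟨min c₀ c₁, lt_min hc₀ hc₁, fun z hz => ?_⟩
  obtain ⟨i, j, hij, hji, hline⟩ : ∃ i j : Fin 2, i ≠ j ∧ |z j| ≤ |z i| ∧
      ∀ t ∈ Set.Icc (-1 : ℝ) 1, min c₀ c₁ *
        |F (EuclideanSpace.single i 1 + t • EuclideanSpace.single j 1)| ^ (1 - 1 / (d : ℝ)) ≤
          ‖fderiv ℝ F (EuclideanSpace.single i 1 + t • EuclideanSpace.single j 1)‖ := by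
    rcases le_total |z 1| |z 0| with h | h
    · exact ⟨0, 1, by decide, h, fun t ht =>
        (mul_le_mul_of_nonneg_right (min_le_left _ _) (by positivity)).trans (h₀ t ht)⟩
    · exact ⟨1, 0, by decide, h, fun t ht =>
        (mul_le_mul_of_nonneg_right (min_le_right _ _) (by positivity)).trans (h₁ t ht)⟩
  have hzi : z i ≠ 0 := by
    intro h0
    refine hz (PiLp.ext fun k => ?_)
    rcases (by omega : k = i ∨ k = j) with rfl | rfl
    · simpa using h0
    · simpa [h0] using hji
  have ht : z j / z i ∈ Set.Icc (-1 : ℝ) 1 := by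
    rw [Set.mem_Icc, ← abs_le, abs_div, div_le_one (abs_pos.2 hzi)]
    exact hji
  have hscaled := mul_rpow_le_norm_fderiv_smul (fun t z => hf.eval_smul t _) hd (hline _ ht) hzi
  rwa [← EuclideanSpace.eq_smul_single_add_smul_single_of_fin_two hij hzi] at hscaled

end MvPolynomial

/-- a nonzero real homogeneous polynomial of degree `d ≥ 1` in two
variables has Łojasiewicz gradient exponent `1 - 1/d` at the origin. -/
theorem stmt11 (d : ℕ) (hd : 1 ≤ d) (f : MvPolynomial (Fin 2) ℝ) (hf : f ≠ 0)
    (hhom : f.IsHomogeneous d) :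
    LGE (fun z : EuclideanSpace ℝ (Fin 2) => MvPolynomial.eval (fun i => z i) f) =
      1 - 1 / (d : ℝ) := by
  obtain ⟨x, hx⟩ : ∃ x : Fin 2 → ℝ, MvPolynomial.eval x f ≠ 0 := by
    by_contra! h
    exact hf (MvPolynomial.funext fun x => by simp [h x])
  obtain ⟨c, hc, hgrad⟩ := hhom.exists_mul_rpow_le_norm_fderiv hf hd
  exact LGE_eq_of_homogeneous (fun t z => hhom.eval_smul t _) hd
    (MvPolynomial.continuous_eval f |>.comp (PiLp.continuous_ofLp 2 _)).continuousAt
    (z₀ := WithLp.toLp 2 x) hx hc hgrad
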